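/- For an odd prime p, the weighted count of isomorphism classes of elliptic curves over 𝔽_p with full rational 2-torsion satisfies S*_{2×2,0}(p) = Σ_{E/𝔽_p, E(𝔽_p)[2] ≅ (ℤ/2ℤ)²} 1/|Aut(E)| = p/6 − 1/3. -/

import Mathlib

/-!
Completing the square in `y` identifies the affine rational 2-torsion points of a Weierstrass
equation over a field of odd characteristic with the rational roots of its 2-torsion polynomial
`4X³ + b₂X² + 2b₄X + b₆`, whose discriminant is `16Δ`. So the equation is nonsingular with full
rational 2-torsion exactly when this cubic has three distinct roots in `𝔽_p`. For odd `p` the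
quantities `(b₂, 2b₄, b₆, a₁, a₃)` are affine coordinates on the space of Weierstrass equations,
and a cubic with leading coefficient `4` and three distinct roots is determined by its root set.
Hence there are `p² · C(p, 3)` such equations, and dividing by `(p - 1)p³` gives `(p - 2)/6`.
-/

/-- The Weierstrass curve with coefficient tuple `(a₁, a₂, a₃, a₄, a₆)`. -/
def wcOf {R : Type*} [CommRing R] (v : R × R × R × R × R) : WeierstrassCurve R :=
  ⟨v.1, v.2.1, v.2.2.1, v.2.2.2.1, v.2.2.2.2⟩

/-- The number of rational 2-torsion points of a Weierstrass curve over a field of odd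
characteristic: the point at infinity together with the affine points `(x, y)` on the curve
with `2y + a₁x + a₃ = 0`. -/
noncomputable def wcTwoTorsionCount {R : Type*} [CommRing R] (W : WeierstrassCurve R) : ℕ :=
  1 + Nat.card {P : R × R //
    W.toAffine.Equation P.1 P.2 ∧ 2 * P.2 + W.a₁ * P.1 + W.a₃ = 0}

open Polynomial

theorem four_ne_zero_of_two_ne_zero {R : Type*} [Semiring R] [NoZeroDivisors R]
    (h2 : (2 : R) ≠ 0) : (4 : R) ≠ 0 := by
  rw [show (4 : R) = 2 * 2 by norm_num]
  exact mul_ne_zero h2 h2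

theorem Nat.cast_choose_three {K : Type*} [Field K] [CharZero K] (n : ℕ) :
    (n.choose 3 : K) = n * (n - 1) * (n - 2) / 6 := by
  rw [Nat.cast_choose_eq_descPochhammer_div]
  simp [descPochhammer_succ_right, Nat.factorial]

namespace Cubic

variable {K : Type*} [Field K]

/-- The cubic `a ∏_{x ∈ s} (X - x)`; only meaningful when `s.card = 3`, since the coefficients
of the product above degree `2` are discarded. -/
noncomputable def ofRoots (a : K) (s : Finset K) : Cubic K :=
  let f := C a * ∏ x ∈ s, (X - C x)
  ⟨a, f.coeff 2, f.coeff 1, f.coeff 0⟩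

theorem toPoly_ofRoots {a : K} (ha : a ≠ 0) {s : Finset K} (hs : s.card = 3) :
    (ofRoots a s).toPoly = C a * ∏ x ∈ s, (X - C x) := by
  set f := C a * ∏ x ∈ s, (X - C x)
  have hdeg : f.natDegree = 3 := by
    rw [natDegree_C_mul ha, natDegree_finsetProd_X_sub_C_eq_card, hs]
  have hlead : f.coeff 3 = a := by
    rw [← hdeg, coeff_natDegree, leadingCoeff_C_mul_of_isUnit ha.isUnit,
      (monic_prod_of_monic _ _ fun x _ => monic_X_sub_C x).leadingCoeff, mul_one]
  have hf : f.degree ≤ 3 := natDegree_le_iff_degree_le.mp hdeg.le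
  have : ofRoots a s = Cubic.equiv.symm ⟨f, hf⟩ := Cubic.ext hlead.symm rfl rfl rfl
  rw [this]
  exact congrArg Subtype.val (Cubic.equiv.apply_symm_apply ⟨f, hf⟩)

theorem roots_ofRoots {a : K} (ha : a ≠ 0) {s : Finset K} (hs : s.card = 3) :
    (ofRoots a s).roots = s.val := by
  rw [roots, toPoly_ofRoots ha hs, roots_C_mul _ ha, roots_prod_X_sub_C]

variable [DecidableEq K] {P : Cubic K}

theorem card_roots_eq_three_and_nodup (ha : P.a ≠ 0) (h : P.roots.toFinset.card = 3) :
    P.roots.card = 3 ∧ P.roots.Nodup := by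
  have hle : P.roots.card ≤ 3 := natDegree_of_a_ne_zero ha ▸ card_roots' P.toPoly
  have hcard : P.roots.card = 3 := le_antisymm hle (h ▸ Multiset.toFinset_card_le _)
  exact ⟨hcard, Multiset.toFinset_card_eq_card_iff_nodup.mp (h.trans hcard.symm)⟩

theorem ofRoots_roots_toFinset (ha : P.a ≠ 0) (h : P.roots.toFinset.card = 3) :
    ofRoots P.a P.roots.toFinset = P := by
  obtain ⟨hcard, hnodup⟩ := card_roots_eq_three_and_nodup ha h
  rw [← toPoly_injective, toPoly_ofRoots ha h, Finset.prod_eq_multiset_prod,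
    Multiset.toFinset_val, hnodup.dedup, ← leadingCoeff_of_a_ne_zero ha]
  exact C_leadingCoeff_mul_prod_multiset_X_sub_C (hcard.trans (natDegree_of_a_ne_zero ha).symm)

theorem discr_ne_zero_of_card_roots_toFinset (ha : P.a ≠ 0) (h : P.roots.toFinset.card = 3) :
    P.discr ≠ 0 := by
  obtain ⟨hcard, hnodup⟩ := card_roots_eq_three_and_nodup ha h
  have hsplit : (P.toPoly.map (RingHom.id K)).Splits :=
    (splits_iff_card_roots (φ := RingHom.id K) ha).mpr hcard
  exact (discr_ne_zero_iff_roots_nodup ha hsplit).mpr hnodup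

noncomputable def coeffsEquivRootFinset (a : K) (ha : a ≠ 0) :
    {bcd : K × K × K // (⟨a, bcd.1, bcd.2.1, bcd.2.2⟩ : Cubic K).roots.toFinset.card = 3} ≃
      {s : Finset K // s.card = 3} where
  toFun bcd := ⟨_, bcd.2⟩
  invFun s := ⟨((ofRoots a s).b, (ofRoots a s).c, (ofRoots a s).d), by
      show (ofRoots a s).roots.toFinset.card = 3
      rw [roots_ofRoots ha s.2, Finset.val_toFinset, s.2]⟩
  left_inv := by
    rintro ⟨⟨b, c, d⟩, h⟩
    exact Subtype.ext (congrArg (fun P : Cubic K => (P.b, P.c, P.d))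
      (ofRoots_roots_toFinset ha h))
  right_inv s :=
    Subtype.ext ((congrArg Multiset.toFinset (roots_ofRoots ha s.2)).trans s.1.val_toFinset)

theorem natCard_coeffs_card_roots_toFinset_eq_three [Fintype K] {a : K} (ha : a ≠ 0) :
    Nat.card {bcd : K × K × K //
        (⟨a, bcd.1, bcd.2.1, bcd.2.2⟩ : Cubic K).roots.toFinset.card = 3} =
      (Fintype.card K).choose 3 := by
  rw [Nat.card_congr (coeffsEquivRootFinset a ha), Nat.card_eq_fintype_card,
    Fintype.card_finset_len]

end Cubic

namespace WeierstrassCurve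

variable {K : Type*} [Field K] (W : WeierstrassCurve K)

theorem mem_twoTorsionPolynomial_roots_iff (h2 : (2 : K) ≠ 0) {x y : K}
    (hy : 2 * y + W.a₁ * x + W.a₃ = 0) :
    x ∈ W.twoTorsionPolynomial.roots ↔ W.toAffine.Equation x y := by
  have h4 := four_ne_zero_of_two_ne_zero h2
  rw [Cubic.mem_roots_iff (Cubic.ne_zero_of_a_ne_zero h4), Affine.equation_iff]
  simp only [twoTorsionPolynomial, b₂, b₄, b₆]
  have key : 4 * x ^ 3 + (W.a₁ ^ 2 + 4 * W.a₂) * x ^ 2 + 2 * (2 * W.a₄ + W.a₁ * W.a₃) * x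
      + (W.a₃ ^ 2 + 4 * W.a₆) = 4 * (x ^ 3 + W.a₂ * x ^ 2 + W.a₄ * x + W.a₆
        - (y ^ 2 + W.a₁ * x * y + W.a₃ * y)) := by
    linear_combination (2 * y + W.a₁ * x + W.a₃) * hy
  rw [key, mul_eq_zero, or_iff_right h4, sub_eq_zero, eq_comm]

noncomputable def twoTorsionPointsEquivRoots (h2 : (2 : K) ≠ 0) :
    {P : K × K // W.toAffine.Equation P.1 P.2 ∧ 2 * P.2 + W.a₁ * P.1 + W.a₃ = 0} ≃
      {x : K // x ∈ W.twoTorsionPolynomial.roots} where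
  toFun P := ⟨P.1.1, (W.mem_twoTorsionPolynomial_roots_iff h2 P.2.2).mpr P.2.1⟩
  invFun x :=
    have hy : 2 * (-(W.a₁ * x.1 + W.a₃) / 2) + W.a₁ * x.1 + W.a₃ = 0 := by
      field_simp
      ring
    ⟨(x.1, -(W.a₁ * x.1 + W.a₃) / 2), (W.mem_twoTorsionPolynomial_roots_iff h2 hy).mp x.2, hy⟩
  left_inv := by
    rintro ⟨⟨x, y⟩, -, hy⟩
    ext
    · rfl
    · simp only
      field_simp
      linear_combination -hy
  right_inv _ := rfl

variable [DecidableEq K]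

theorem wcTwoTorsionCount_eq_one_add_card_roots (h2 : (2 : K) ≠ 0) :
    wcTwoTorsionCount W = 1 + W.twoTorsionPolynomial.roots.toFinset.card := by
  rw [wcTwoTorsionCount, Nat.card_congr (W.twoTorsionPointsEquivRoots h2)]
  simp only [← Multiset.mem_toFinset, Nat.card_eq_finsetCard]

theorem full_twoTorsion_iff_card_roots_eq_three (h2 : (2 : K) ≠ 0) :
    W.Δ ≠ 0 ∧ wcTwoTorsionCount W = 4 ↔ W.twoTorsionPolynomial.roots.toFinset.card = 3 := by
  have h4 : W.twoTorsionPolynomial.a ≠ 0 := four_ne_zero_of_two_ne_zero h2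
  rw [W.wcTwoTorsionCount_eq_one_add_card_roots h2]
  refine ⟨fun h => by omega, fun h => ⟨fun hΔ => ?_, by omega⟩⟩
  apply Cubic.discr_ne_zero_of_card_roots_toFinset h4 h
  rw [twoTorsionPolynomial_discr, hΔ, mul_zero]

end WeierstrassCurve

noncomputable def twoTorsionCoeffsEquiv {K : Type*} [Field K] (h2 : (2 : K) ≠ 0) :
    K × K × K × K × K ≃ (K × K × K) × (K × K) where
  toFun v := (((wcOf v).b₂, 2 * (wcOf v).b₄, (wcOf v).b₆), (v.1, v.2.2.1))
  invFun w := (w.2.1, (w.1.1 - w.2.1 ^ 2) / 4, w.2.2, (w.1.2.1 - 2 * w.2.1 * w.2.2) / 4,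
    (w.1.2.2 - w.2.2 ^ 2) / 4)
  left_inv := by
    rintro ⟨a₁, a₂, a₃, a₄, a₆⟩
    have h4 := four_ne_zero_of_two_ne_zero h2
    simp only [wcOf, WeierstrassCurve.b₂, WeierstrassCurve.b₄, WeierstrassCurve.b₆,
      Prod.mk.injEq, true_and]
    refine ⟨?_, ?_, ?_⟩ <;> field_simp <;> ring
  right_inv := by
    rintro ⟨⟨b, c, d⟩, a₁, a₃⟩
    have h4 := four_ne_zero_of_two_ne_zero h2
    simp only [wcOf, WeierstrassCurve.b₂, WeierstrassCurve.b₄, WeierstrassCurve.b₆,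
      Prod.mk.injEq, and_true]
    refine ⟨?_, ?_, ?_⟩ <;> field_simp <;> ring

theorem natCard_full_twoTorsion {K : Type*} [Field K] [Fintype K] (h2 : (2 : K) ≠ 0) :
    Nat.card {v : K × K × K × K × K // (wcOf v).Δ ≠ 0 ∧ wcTwoTorsionCount (wcOf v) = 4} =
      (Fintype.card K).choose 3 * Fintype.card K ^ 2 := by
  classical
  calc _ = Nat.card {v // (wcOf v).twoTorsionPolynomial.roots.toFinset.card = 3} :=
        Nat.card_congr <| Equiv.subtypeEquivRight fun v =>
          (wcOf v).full_twoTorsion_iff_card_roots_eq_three h2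
    _ = Nat.card {w : (K × K × K) × (K × K) //
          (⟨4, w.1.1, w.1.2.1, w.1.2.2⟩ : Cubic K).roots.toFinset.card = 3} :=
        Nat.card_congr ((twoTorsionCoeffsEquiv h2).subtypeEquiv fun _ => Iff.rfl)
    _ = _ := by
      rw [Nat.card_congr (Equiv.prodSubtypeFstEquivSubtypeProd (p := fun bcd : K × K × K =>
          (⟨4, bcd.1, bcd.2.1, bcd.2.2⟩ : Cubic K).roots.toFinset.card = 3)), Nat.card_prod,
        Cubic.natCard_coeffs_card_roots_toFinset_eq_three (four_ne_zero_of_two_ne_zero h2),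
        Nat.card_prod, Nat.card_eq_fintype_card]
      ring

open scoped Classical in
/-- For an odd prime `p`, the weighted number of isomorphism classes of elliptic curves over
`𝔽_p` with full rational 2-torsion `E(𝔽_p)[2] ≅ (ℤ/2ℤ)²` is
`S*_{2×2,0}(p) = Σ 1/|Aut E| = p/6 - 1/3`; the weighted count is computed by counting
nonsingular Weierstrass equations, each isomorphism class accounting for `(p-1)p³/|Aut E|`
of them. -/
theorem weighted_count_full_two_torsion (p : ℕ) [Fact p.Prime] (hp : p ≠ 2) :
    (((p : ℚ) - 1) * p ^ 3)⁻¹ *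
      ((Finset.univ.filter (fun v : ZMod p × ZMod p × ZMod p × ZMod p × ZMod p =>
        (wcOf v).Δ ≠ 0 ∧ wcTwoTorsionCount (wcOf v) = 4)).card : ℚ) =
    (p : ℚ) / 6 - 1 / 3 := by
  have h2 : (2 : ZMod p) ≠ 0 := Ring.two_ne_zero (by rwa [ZMod.ringChar_zmod_n])
  have hp0 : (p : ℚ) ≠ 0 := by exact_mod_cast (Fact.out : p.Prime).ne_zero
  have hp1 : (p : ℚ) - 1 ≠ 0 := sub_ne_zero.mpr (by exact_mod_cast (Fact.out : p.Prime).ne_one)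
  rw [← Fintype.card_subtype, ← Nat.card_eq_fintype_card, natCard_full_twoTorsion h2,
    ZMod.card]
  push_cast
  rw [Nat.cast_choose_three]
  field_simp
  ring
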